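/- arXiv:2209.08050 — 4 statements merged into one kernel-verified Lean document; each statement's English description precedes it below -/
import Mathlib

section
/- Let n ≥ 2 and 1 ≤ i < j ≤ n. Then Cov[ln(U_(i)), ln(1−U_(j))] = −ψ₁(n+1), where E[ln(U_(i)) ln(1−U_(j))] is the integral of (ln u)(ln(1−v)) against the joint density c_{i,j,n} u^{i−1}(v−u)^{j−i−1}(1−v)^{n−j} over {0 < u < v < 1}, and Cov[X,Y] = E[XY] − E[X]E[Y]. -/
open MeasureTheory intervalIntegral

/-- The digamma function `ψ`, the derivative of `log Γ` on `(0, ∞)`. -/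
noncomputable def digamma (x : ℝ) : ℝ := deriv (fun y => Real.log (Real.Gamma y)) x

/-- The trigamma function `ψ₁`, the derivative of the digamma function. -/
noncomputable def trigamma (x : ℝ) : ℝ := deriv digamma x

/-!
Write the density as `u^(x-1) (v-u)^(y-1) (1-v)^(z-1)` with `x = i`, `y = j - i`, `z = n + 1 - j`.
Differentiating the beta integral `B(x, y) = ∫₀¹ t^(x-1) (1-t)^(y-1) dt = Γ(x) Γ(y) / Γ(x+y)`
under the integral sign gives `∫₀¹ log t · t^(x-1) (1-t)^(y-1) dt = B(x, y) (ψ(x) - ψ(x+y))`,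
its mirror image with `log (1-t)`, and, differentiating once more, the mixed moment
`∫₀¹ log t log (1-t) t^(x-1) (1-t)^(y-1) dt = B(x, y) ((ψ(x) - ψ(x+y)) (ψ(y) - ψ(x+y)) - ψ₁(x+y))`.
The substitution `u = v t` turns the inner integral over `0 < u < v` into beta integrals times
`v^(x+y-1)`, so the outer integral is again of this form, with parameters `x + y` and `z`.
Since `B(x, y) B(x+y, z) = Γ(x) Γ(y) Γ(z) / Γ(x+y+z) = 1 / c_{i,j,n}`, the terms with `ψ(x+y)`
cancel and only `-ψ₁(n+1)` survives in the covariance.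
-/

open Real Set ProbabilityTheory
open scoped Topology Interval

theorem Real.analyticAt_Gamma {x : ℝ} (hx : 0 < x) : AnalyticAt ℝ Gamma x := by
  have hΓ : AnalyticAt ℂ Complex.Gamma x := by
    refine DifferentiableOn.analyticAt (s := {s : ℂ | 0 < s.re}) (fun s hs => ?_)
      ((isOpen_lt continuous_const Complex.continuous_re).mem_nhds (by simpa))
    refine (Complex.differentiableAt_Gamma s fun m hm => ?_).differentiableWithinAt
    have : (0 : ℝ) < -m := by simpa [hm] using hs
    linarith [m.cast_nonneg (α := ℝ)]
  have hre : AnalyticAt ℝ (fun y : ℝ => (Complex.Gamma y).re) x :=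
    Complex.reCLM.analyticAt _ |>.comp (hΓ.restrictScalars.comp (Complex.ofRealCLM.analyticAt x))
  simpa [Complex.Gamma_ofReal] using hre

theorem analyticAt_logGamma {x : ℝ} (hx : 0 < x) :
    AnalyticAt ℝ (fun y => log (Gamma y)) x :=
  (analyticAt_Gamma hx).log (Gamma_pos_of_pos hx)

theorem hasDerivAt_logGamma {x : ℝ} (hx : 0 < x) :
    HasDerivAt (fun y => log (Gamma y)) (digamma x) x :=
  (analyticAt_logGamma hx).differentiableAt.hasDerivAt

theorem hasDerivAt_digamma {x : ℝ} (hx : 0 < x) : HasDerivAt digamma (trigamma x) x :=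
  (analyticAt_logGamma hx).deriv.differentiableAt.hasDerivAt

theorem Real.hasDerivAt_Gamma_of_pos {x : ℝ} (hx : 0 < x) :
    HasDerivAt Gamma (Gamma x * digamma x) x := by
  have hexp := (hasDerivAt_logGamma hx).exp
  rw [exp_log (Gamma_pos_of_pos hx)] at hexp
  refine hexp.congr_of_eventuallyEq ?_
  filter_upwards [Ioi_mem_nhds hx] with y hy
  rw [exp_log (Gamma_pos_of_pos hy)]

theorem hasDerivAt_beta_right {x y : ℝ} (hx : 0 < x) (hy : 0 < y) :
    HasDerivAt (beta x) (beta x y * (digamma y - digamma (x + y))) y := by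
  have hxy : 0 < x + y := add_pos hx hy
  have hden : HasDerivAt (fun z => Gamma (x + z)) (Gamma (x + y) * digamma (x + y)) y := by
    simpa using (hasDerivAt_Gamma_of_pos hxy).comp_const_add x y
  refine (((hasDerivAt_Gamma_of_pos hy).const_mul (Gamma x)).div hden
    (Gamma_pos_of_pos hxy).ne').congr_deriv ?_
  rw [beta]
  field_simp

theorem abs_log_mul_rpow_le {t : ℝ} (ht₀ : 0 < t) (ht₁ : t ≤ 1) (r : ℝ) {c : ℝ} (hc : 0 < c) :
    |log t * t ^ r| ≤ c⁻¹ * t ^ (r - c) := by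
  have hlog : -log t ≤ t ^ (-c) / c := by
    simpa [log_inv, rpow_neg ht₀.le, inv_rpow ht₀.le] using
      log_le_rpow_div (inv_nonneg.2 ht₀.le) hc
  calc |log t * t ^ r| = -log t * t ^ r := by
        rw [abs_mul, abs_of_nonneg (rpow_nonneg ht₀.le r), abs_of_nonpos (log_nonpos ht₀.le ht₁)]
    _ ≤ t ^ (-c) / c * t ^ r := by gcongr
    _ = c⁻¹ * t ^ (r - c) := by rw [sub_eq_neg_add, rpow_add ht₀]; ring

theorem abs_log_mul_rpow_sub_one_le {x : ℝ} (hx : 0 < x) :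
    ∀ t ∈ Ioc (0 : ℝ) 1, |log t * t ^ (x - 1)| ≤ (x / 2)⁻¹ * t ^ (x / 2 - 1) := fun t ht => by
  convert abs_log_mul_rpow_le ht.1 ht.2 (x - 1) (half_pos hx) using 3
  ring

theorem integral_rpow_mul_one_sub_rpow {x y : ℝ} (hx : 0 < x) (hy : 0 < y) :
    ∫ t in (0 : ℝ)..1, t ^ (x - 1) * (1 - t) ^ (y - 1) = beta x y := by
  have hcomplex : Complex.betaIntegral x y =
      ↑(∫ t in (0 : ℝ)..1, t ^ (x - 1) * (1 - t) ^ (y - 1)) := by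
    rw [Complex.betaIntegral, ← intervalIntegral.integral_ofReal]
    refine integral_congr fun t ht => ?_
    rw [uIcc_of_le zero_le_one] at ht
    push_cast [Complex.ofReal_cpow ht.1, Complex.ofReal_cpow (sub_nonneg.2 ht.2)]
    rfl
  rw [beta_eq_betaIntegralReal x y hx hy, hcomplex, Complex.ofReal_re]

theorem intervalIntegrable_rpow_mul_one_sub_rpow {x y : ℝ} (hx : 0 < x) (hy : 0 < y) :
    IntervalIntegrable (fun t => t ^ (x - 1) * (1 - t) ^ (y - 1)) volume 0 1 := by
  by_contra h
  -- a non-integrable function has integral `0`, but `B(x, y) > 0`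
  exact (beta_pos hx hy).ne' (integral_undef h ▸ integral_rpow_mul_one_sub_rpow hx hy).symm

section Domination

variable {w : ℝ → ℝ} {p C : ℝ}

theorem intervalIntegrable_mul_one_sub_rpow (hw : Measurable w) (hp : 0 < p)
    (hwC : ∀ t ∈ Ioc (0 : ℝ) 1, |w t| ≤ C * t ^ (p - 1)) {y : ℝ} (hy : 0 < y) :
    IntervalIntegrable (fun t => w t * (1 - t) ^ (y - 1)) volume 0 1 := by
  refine ((intervalIntegrable_rpow_mul_one_sub_rpow hp hy).const_mul C).mono_fun'
    (hw.mul (by fun_prop)).aestronglyMeasurable ?_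
  rw [Filter.EventuallyLE, ae_restrict_iff' measurableSet_uIoc]
  refine .of_forall fun t ht => ?_
  rw [uIoc_of_le zero_le_one] at ht
  have h1t : 0 ≤ (1 - t) ^ (y - 1) := rpow_nonneg (sub_nonneg.2 ht.2) _
  rw [norm_mul, norm_of_nonneg h1t, ← mul_assoc]
  exact mul_le_mul_of_nonneg_right (hwC t ht) h1t

theorem hasDerivAt_integral_mul_one_sub_rpow (hw : Measurable w) (hp : 0 < p)
    (hwC : ∀ t ∈ Ioc (0 : ℝ) 1, |w t| ≤ C * t ^ (p - 1)) {y : ℝ} (hy : 0 < y) :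
    IntervalIntegrable (fun t => w t * (log (1 - t) * (1 - t) ^ (y - 1))) volume 0 1 ∧
      HasDerivAt (fun z => ∫ t in (0 : ℝ)..1, w t * (1 - t) ^ (z - 1))
        (∫ t in (0 : ℝ)..1, w t * (log (1 - t) * (1 - t) ^ (y - 1))) y := by
  have hy4 : 0 < y / 4 := by positivity
  refine hasDerivAt_integral_of_dominated_loc_of_deriv_le (Metric.ball_mem_nhds y (half_pos hy))
    (F := fun z t => w t * (1 - t) ^ (z - 1))
    (F' := fun z t => w t * (log (1 - t) * (1 - t) ^ (z - 1)))
    (bound := fun t => C * (4 / y) * (t ^ (p - 1) * (1 - t) ^ (y / 4 - 1)))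
    (.of_forall fun z =>
      (hw.mul (by fun_prop : Measurable fun t : ℝ => (1 - t) ^ (z - 1))).aestronglyMeasurable)
    (intervalIntegrable_mul_one_sub_rpow hw hp hwC hy)
    (Measurable.aestronglyMeasurable <|
      hw.mul (by fun_prop : Measurable fun t : ℝ => log (1 - t) * (1 - t) ^ (y - 1))) ?_
    ((intervalIntegrable_rpow_mul_one_sub_rpow hp hy4).const_mul _) ?_
  all_goals
    filter_upwards [volume.ae_ne 1] with t ht1 ht z hz
    rw [uIoc_of_le zero_le_one] at ht
    have hs₀ : 0 < 1 - t := sub_pos.2 (ht.2.lt_of_ne ht1)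
  · have hs₁ : 1 - t ≤ 1 := by linarith [ht.1]
    rw [Metric.mem_ball, Real.dist_eq, abs_lt] at hz
    have hlog : |log (1 - t) * (1 - t) ^ (z - 1)| ≤ (y / 4)⁻¹ * (1 - t) ^ (y / 4 - 1) :=
      (abs_log_mul_rpow_le hs₀ hs₁ _ hy4).trans <| mul_le_mul_of_nonneg_left
        (rpow_le_rpow_of_exponent_ge hs₀ hs₁ (by linarith)) (inv_nonneg.2 hy4.le)
    calc ‖w t * (log (1 - t) * (1 - t) ^ (z - 1))‖
        = |w t| * |log (1 - t) * (1 - t) ^ (z - 1)| := by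
          rw [norm_mul, norm_eq_abs, norm_eq_abs]
      _ ≤ C * t ^ (p - 1) * ((y / 4)⁻¹ * (1 - t) ^ (y / 4 - 1)) :=
        mul_le_mul (hwC t ht) hlog (abs_nonneg _) ((abs_nonneg _).trans (hwC t ht))
      _ = C * (4 / y) * (t ^ (p - 1) * (1 - t) ^ (y / 4 - 1)) := by ring
  · exact ((((hasDerivAt_id' z).sub_const 1).const_rpow hs₀).const_mul (w t)).congr_deriv
      (by ring)

end Domination

theorem integral_rpow_mul_log_one_sub_mul_rpow {x y : ℝ} (hx : 0 < x) (hy : 0 < y) :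
    ∫ t in (0 : ℝ)..1, t ^ (x - 1) * (log (1 - t) * (1 - t) ^ (y - 1)) =
      beta x y * (digamma y - digamma (x + y)) := by
  have hB :
      (fun z => ∫ t in (0 : ℝ)..1, t ^ (x - 1) * (1 - t) ^ (z - 1)) =ᶠ[𝓝 y] beta x := by
    filter_upwards [Ioi_mem_nhds hy] with z hz using integral_rpow_mul_one_sub_rpow hx hz
  have hwC : ∀ t ∈ Ioc (0 : ℝ) 1, |t ^ (x - 1)| ≤ 1 * t ^ (x - 1) := fun t ht => by
    rw [one_mul, abs_of_nonneg (rpow_nonneg ht.1.le _)]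
  exact ((hasDerivAt_beta_right hx hy).congr_of_eventuallyEq hB).unique
    (hasDerivAt_integral_mul_one_sub_rpow (by fun_prop) hx hwC hy).2 |>.symm

theorem integral_log_mul_rpow_mul_one_sub_rpow {x y : ℝ} (hx : 0 < x) (hy : 0 < y) :
    ∫ t in (0 : ℝ)..1, log t * t ^ (x - 1) * (1 - t) ^ (y - 1) =
      beta x y * (digamma x - digamma (x + y)) := by
  have hflip := integral_comp_sub_left
    (fun t => t ^ (y - 1) * (log (1 - t) * (1 - t) ^ (x - 1))) 1 (a := 0) (b := 1)
  simp only [sub_sub_cancel, sub_zero, sub_self] at hflip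
  rw [integral_rpow_mul_log_one_sub_mul_rpow hy hx, add_comm y x] at hflip
  calc ∫ t in (0 : ℝ)..1, log t * t ^ (x - 1) * (1 - t) ^ (y - 1)
      = ∫ t in (0 : ℝ)..1, (1 - t) ^ (y - 1) * (log t * t ^ (x - 1)) :=
        integral_congr fun t _ => by ring
    _ = beta x y * (digamma x - digamma (x + y)) := by
        rw [hflip, beta, beta, mul_comm (Gamma y), add_comm y x]

theorem integral_log_mul_rpow_mul_log_one_sub_mul_rpow {x y : ℝ} (hx : 0 < x) (hy : 0 < y) :
    ∫ t in (0 : ℝ)..1, log t * t ^ (x - 1) * (log (1 - t) * (1 - t) ^ (y - 1)) =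
      beta x y * ((digamma x - digamma (x + y)) * (digamma y - digamma (x + y))
        - trigamma (x + y)) := by
  have hE : (fun z => ∫ t in (0 : ℝ)..1, log t * t ^ (x - 1) * (1 - t) ^ (z - 1)) =ᶠ[𝓝 y]
      fun z => beta x z * (digamma x - digamma (x + z)) := by
    filter_upwards [Ioi_mem_nhds hy] with z hz
      using integral_log_mul_rpow_mul_one_sub_rpow hx hz
  have hψ : HasDerivAt (fun z => digamma x - digamma (x + z)) (-trigamma (x + y)) y := by
    simpa using ((hasDerivAt_digamma (add_pos hx hy)).comp_const_add x y).const_sub (digamma x)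
  have hderiv := ((hasDerivAt_beta_right hx hy).mul hψ).congr_of_eventuallyEq hE
  rw [(hasDerivAt_integral_mul_one_sub_rpow (by fun_prop) (half_pos hx)
    (abs_log_mul_rpow_sub_one_le hx) hy).2.unique hderiv]
  ring

theorem integral_log_mul_rpow_mul_sub_rpow {v x y : ℝ} (hv : 0 < v) (hx : 0 < x) (hy : 0 < y) :
    ∫ u in (0 : ℝ)..v, log u * (u ^ (x - 1) * (v - u) ^ (y - 1)) =
      beta x y * (log v + digamma x - digamma (x + y)) * v ^ (x + y - 1) := by
  have hscale := smul_integral_comp_mul_left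
    (fun u => log u * (u ^ (x - 1) * (v - u) ^ (y - 1))) v (a := 0) (b := 1)
  simp only [mul_zero, mul_one, smul_eq_mul] at hscale
  have hsplit : ∀ᵐ t ∂volume, t ∈ Ι (0 : ℝ) 1 →
      log (v * t) * ((v * t) ^ (x - 1) * (v - v * t) ^ (y - 1)) =
        v ^ (x + y - 2) * log v * (t ^ (x - 1) * (1 - t) ^ (y - 1)) +
          v ^ (x + y - 2) * (log t * t ^ (x - 1) * (1 - t) ^ (y - 1)) := by
    filter_upwards [volume.ae_ne 0] with t ht0 ht
    rw [uIoc_of_le zero_le_one] at ht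
    rw [log_mul hv.ne' ht0, mul_rpow hv.le ht.1.le, ← mul_one_sub,
      mul_rpow hv.le (sub_nonneg.2 ht.2), show x + y - 2 = (x - 1) + (y - 1) by ring,
      rpow_add hv]
    ring
  have hlog := intervalIntegrable_mul_one_sub_rpow (by fun_prop) (half_pos hx)
    (abs_log_mul_rpow_sub_one_le hx) hy
  rw [← hscale, integral_congr_ae hsplit,
    integral_add ((intervalIntegrable_rpow_mul_one_sub_rpow hx hy).const_mul _) (hlog.const_mul _),
    intervalIntegral.integral_const_mul, intervalIntegral.integral_const_mul,
    integral_rpow_mul_one_sub_rpow hx hy, integral_log_mul_rpow_mul_one_sub_rpow hx hy,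
    show x + y - 1 = (x + y - 2) + 1 by ring, rpow_add_one hv.ne']
  ring

theorem beta_mul_beta_add {x y z : ℝ} (hx : 0 < x) (hy : 0 < y) :
    beta x y * beta (x + y) z = Gamma x * Gamma y * Gamma z / Gamma (x + y + z) := by
  have := (Gamma_pos_of_pos (add_pos hx hy)).ne'
  rw [beta, beta]
  field_simp

theorem integral_integral_log_mul_log_one_sub_dirichlet {x y z : ℝ}
    (hx : 0 < x) (hy : 0 < y) (hz : 0 < z) :
    ∫ v in (0 : ℝ)..1, ∫ u in (0 : ℝ)..v,
        log u * log (1 - v) * (u ^ (x - 1) * (v - u) ^ (y - 1) * (1 - v) ^ (z - 1)) =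
      Gamma x * Gamma y * Gamma z / Gamma (x + y + z) *
        ((digamma x - digamma (x + y + z)) * (digamma z - digamma (x + y + z))
          - trigamma (x + y + z)) := by
  have hxy := add_pos hx hy
  have hinner : ∀ v ∈ Ι (0 : ℝ) 1, ∫ u in (0 : ℝ)..v,
        log u * log (1 - v) * (u ^ (x - 1) * (v - u) ^ (y - 1) * (1 - v) ^ (z - 1)) =
      beta x y * (log v * v ^ (x + y - 1) * (log (1 - v) * (1 - v) ^ (z - 1)) +
        (digamma x - digamma (x + y)) *
          (v ^ (x + y - 1) * (log (1 - v) * (1 - v) ^ (z - 1)))) := by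
    intro v hv
    rw [uIoc_of_le zero_le_one] at hv
    rw [← integral_congr fun u _ => (by ring : log (1 - v) * (1 - v) ^ (z - 1) *
        (log u * (u ^ (x - 1) * (v - u) ^ (y - 1))) = _),
      intervalIntegral.integral_const_mul, integral_log_mul_rpow_mul_sub_rpow hv.1 hx hy]
    ring
  have hI₁ := (hasDerivAt_integral_mul_one_sub_rpow (by fun_prop) (half_pos hxy)
    (abs_log_mul_rpow_sub_one_le hxy) hz).1
  have hI₂ := (hasDerivAt_integral_mul_one_sub_rpow (w := fun t => t ^ (x + y - 1))
    (by fun_prop) hxy (fun t ht => by rw [one_mul, abs_of_nonneg (rpow_nonneg ht.1.le _)]) hz).1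
  rw [integral_congr_ae (.of_forall hinner), intervalIntegral.integral_const_mul,
    integral_add hI₁ (hI₂.const_mul _), intervalIntegral.integral_const_mul,
    integral_log_mul_rpow_mul_log_one_sub_mul_rpow hxy hz,
    integral_rpow_mul_log_one_sub_mul_rpow hxy hz, ← beta_mul_beta_add hx hy]
  ring

theorem covariance_log_logOneSub_orderStats_general
    (n i j : ℕ) (hi1 : 1 ≤ i) (hij : i < j) (hjn : j ≤ n) :
    ((n.factorial : ℝ) /
        ((i - 1).factorial * (j - i - 1).factorial * (n - j).factorial)) *
        (∫ v in (0:ℝ)..1, ∫ u in (0:ℝ)..v,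
          Real.log u * Real.log (1 - v) *
            (u ^ (i - 1) * (v - u) ^ (j - i - 1) * (1 - v) ^ (n - j)))
      - (digamma i - digamma ((n : ℝ) + 1)) *
          (digamma ((n : ℝ) + 1 - j) - digamma ((n : ℝ) + 1))
      = -trigamma ((n : ℝ) + 1) := by
  obtain ⟨a, rfl⟩ : ∃ a, i = a + 1 := ⟨i - 1, by omega⟩
  obtain ⟨b, rfl⟩ : ∃ b, j = a + b + 2 := ⟨j - a - 2, by omega⟩
  obtain ⟨c, rfl⟩ : ∃ c, n = a + b + c + 2 := ⟨n - (a + b + 2), by omega⟩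
  have h := integral_integral_log_mul_log_one_sub_dirichlet
    (x := a + 1) (y := b + 1) (z := c + 1) (by positivity) (by positivity) (by positivity)
  have hN : (a + 1 + (b + 1) + (c + 1) : ℝ) = ((a + b + c + 2 : ℕ) : ℝ) + 1 := by
    push_cast; ring
  have hz : ((a + b + c + 2 : ℕ) : ℝ) + 1 - ((a + b + 2 : ℕ) : ℝ) = c + 1 := by
    push_cast; ring
  simp only [add_sub_cancel_right, rpow_natCast, hN, Gamma_nat_eq_factorial] at h
  rw [show a + 1 - 1 = a by omega, show a + b + 2 - (a + 1) - 1 = b by omega,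
    show a + b + c + 2 - (a + b + 2) = c by omega, h, hz, Nat.cast_succ a]
  field_simp
  ring

/-- For `1 ≤ i < j ≤ n`, with `(U_(i), U_(j))` the order statistics of
`n` i.i.d. uniforms on `[0,1]` (with joint density
`c_{i,j,n} u^{i−1}(v−u)^{j−i−1}(1−v)^{n−j}` on `{0 < u < v < 1}`,
`c_{i,j,n} = n!/((i−1)!(j−i−1)!(n−j)!)`):
`Cov[ln U_(i), ln(1−U_(j))] = −ψ₁(n+1)`, where `Cov[X,Y] = E[XY] − E[X]E[Y]`,
`E[ln U_(i)] = ψ(i) − ψ(n+1)` and `E[ln(1−U_(j))] = ψ(n+1−j) − ψ(n+1)`. -/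
theorem covariance_log_logOneSub_orderStats
    (n i j : ℕ) (hn : 2 ≤ n) (hi1 : 1 ≤ i) (hij : i < j) (hjn : j ≤ n) :
    ((n.factorial : ℝ) /
        ((i - 1).factorial * (j - i - 1).factorial * (n - j).factorial)) *
        (∫ v in (0:ℝ)..1, ∫ u in (0:ℝ)..v,
          Real.log u * Real.log (1 - v) *
            (u ^ (i - 1) * (v - u) ^ (j - i - 1) * (1 - v) ^ (n - j)))
      - (digamma i - digamma ((n : ℝ) + 1)) *
          (digamma ((n : ℝ) + 1 - j) - digamma ((n : ℝ) + 1))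
      = -trigamma ((n : ℝ) + 1) :=
  covariance_log_logOneSub_orderStats_general n i j hi1 hij hjn
end

section
/- Let 0 < ε < 1/2 and let ω > 0 satisfy tan(ω · ln((1−ε)/ε)) = −2ω. Set λ = ω² + 1/4 and f(t) = (t(1−t))^{−1/2} sin(ω · ln(t/(1−t))) for t ∈ [ε, 1−ε]. Then f satisfies the integral eigenvalue equation f(t) = λ ∫_ε^{1−ε} ((min(s,t) − st) / (s(1−s) t(1−t))) f(s) ds for every t ∈ [ε, 1−ε]. -/
/-!
For `s ≤ t` the kernel equals `1 / (t (1 - s))` and for `s ≥ t` it equals `1 / (s (1 - t))`.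
In the log-odds variable `x = log (s / (1 - s))`, where `ds = s (1 - s) dx`, the two pieces of
`∫ K(s, t) f(s) ds` become `t⁻¹ ∫ e^{x/2} sin (ω x) dx` and `(1 - t)⁻¹ ∫ e^{-x/2} sin (ω x) dx`.
They have the primitives `e^{c x} (c sin (ω x) - ω cos (ω x)) / (c² + ω²)`, `c = ± 1/2`, and
`c² + ω² = λ`. The endpoints `ε`, `1 - ε` sit at `x = ∓ A` with `A = log ((1 - ε) / ε)`, and
`tan (ω A) = -2ω` says exactly that both primitives vanish there; the two terms left at
`x = log (t / (1 - t))` add up to `f(t)`.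
-/

open MeasureTheory intervalIntegral Real

noncomputable def logit (s : ℝ) : ℝ := log (s / (1 - s))

theorem logit_def (s : ℝ) : logit s = log (s / (1 - s)) := rfl

theorem logit_one_sub (s : ℝ) : logit (1 - s) = -logit s := by
  rw [logit, logit, sub_sub_cancel, ← log_inv, inv_div]

theorem hasDerivAt_logit {s : ℝ} (h0 : 0 < s) (h1 : s < 1) :
    HasDerivAt logit (s * (1 - s))⁻¹ s := by
  have h1s : 1 - s ≠ 0 := by linarith
  have hq : HasDerivAt (fun x => x / (1 - x)) ((1 * (1 - s) - s * -1) / (1 - s) ^ 2) s :=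
    (hasDerivAt_id' s).div ((hasDerivAt_id' s).const_sub 1) h1s
  refine (hq.log (div_pos h0 (by linarith)).ne').congr_deriv ?_
  field_simp
  ring

theorem exp_half_mul_logit {s : ℝ} (h0 : 0 < s) (h1 : s < 1) :
    exp (1 / 2 * logit s) = s / √(s * (1 - s)) := by
  have h1s : 0 < 1 - s := by linarith
  rw [one_div_mul_eq_div, exp_half, logit, exp_log (div_pos h0 h1s),
    eq_div_iff (by positivity), ← sqrt_mul (div_pos h0 h1s).le,
    show s / (1 - s) * (s * (1 - s)) = s ^ 2 by field_simp, sqrt_sq h0.le]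

theorem exp_neg_half_mul_logit {s : ℝ} (h0 : 0 < s) (h1 : s < 1) :
    exp (-(1 / 2) * logit s) = (1 - s) / √(s * (1 - s)) := by
  rw [neg_mul, ← mul_neg, ← logit_one_sub, exp_half_mul_logit (by linarith) (by linarith),
    sub_sub_cancel, mul_comm]

noncomputable def expMulSinPrimitive (c ω x : ℝ) : ℝ :=
  exp (c * x) * (c * sin (ω * x) - ω * cos (ω * x))

theorem hasDerivAt_expMulSinPrimitive (c ω x : ℝ) :
    HasDerivAt (expMulSinPrimitive c ω) ((c ^ 2 + ω ^ 2) * (exp (c * x) * sin (ω * x))) x := by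
  have hs := ((hasDerivAt_id' x).const_mul ω).sin
  have hc := ((hasDerivAt_id' x).const_mul ω).cos
  have he := ((hasDerivAt_id' x).const_mul c).exp
  refine (he.mul ((hs.const_mul c).sub (hc.const_mul ω))).congr_deriv ?_
  simp only [Pi.sub_apply]
  ring

theorem expMulSinPrimitive_neg (c ω x : ℝ) :
    expMulSinPrimitive c ω (-x) = expMulSinPrimitive (-c) ω x := by
  simp only [expMulSinPrimitive, mul_neg, neg_mul, sin_neg, cos_neg]

theorem expMulSinPrimitive_eq_zero_of_tan_eq {c ω x : ℝ} (hc : c ≠ 0) (hω : ω ≠ 0)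
    (h : tan (ω * x) = ω / c) : expMulSinPrimitive c ω x = 0 := by
  have hcos : cos (ω * x) ≠ 0 := by
    intro h0
    rw [tan_eq_sin_div_cos, h0, div_zero] at h
    exact div_ne_zero hω hc h.symm
  rw [tan_eq_sin_div_cos, div_eq_div_iff hcos hc] at h
  rw [expMulSinPrimitive, show c * sin (ω * x) - ω * cos (ω * x) = 0 by linarith, mul_zero]

theorem integral_exp_mul_logit_mul_sin_logit (c ω : ℝ) {a b : ℝ} (ha : 0 < a) (hab : a ≤ b)
    (hb : b < 1) :
    (c ^ 2 + ω ^ 2) * ∫ s in a..b, exp (c * logit s) * sin (ω * logit s) / (s * (1 - s))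
      = expMulSinPrimitive c ω (logit b) - expMulSinPrimitive c ω (logit a) := by
  have hsub : Set.uIcc a b ⊆ Set.Ioo 0 1 := Set.uIcc_of_le hab ▸ Set.Icc_subset_Ioo ha hb
  rw [← intervalIntegral.integral_const_mul]
  apply integral_eq_sub_of_hasDerivAt
  · intro s hs
    obtain ⟨hs0, hs1⟩ := hsub hs
    refine ((hasDerivAt_expMulSinPrimitive c ω _).comp s (hasDerivAt_logit hs0 hs1)).congr_deriv ?_
    ring
  · refine ContinuousOn.intervalIntegrable (continuousOn_of_forall_continuousAt fun s hs => ?_)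
    obtain ⟨hs0, hs1⟩ := hsub hs
    have := (hasDerivAt_logit hs0 hs1).continuousAt
    have : s * (1 - s) ≠ 0 := by nlinarith
    fun_prop (disch := assumption)

theorem integral_kernel_mul_sin_logit_of_le (ω : ℝ) {a t : ℝ} (ha : 0 < a) (hat : a ≤ t)
    (ht : t < 1) :
    (ω ^ 2 + 1 / 4) * ∫ s in a..t,
        (min s t - s * t) / (s * (1 - s) * t * (1 - t)) * (sin (ω * logit s) / √(s * (1 - s)))
      = t⁻¹ * (expMulSinPrimitive (1 / 2) ω (logit t)
          - expMulSinPrimitive (1 / 2) ω (logit a)) := by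
  have hK : ∫ s in a..t,
        (min s t - s * t) / (s * (1 - s) * t * (1 - t)) * (sin (ω * logit s) / √(s * (1 - s)))
      = t⁻¹ * ∫ s in a..t, exp (1 / 2 * logit s) * sin (ω * logit s) / (s * (1 - s)) := by
    rw [← intervalIntegral.integral_const_mul]
    refine integral_congr fun s hs => ?_
    rw [Set.uIcc_of_le hat] at hs
    have hs0 : 0 < s := ha.trans_le hs.1
    have h1s : 0 < 1 - s := by linarith [hs.2]
    have h1t : 0 < 1 - t := by linarith
    rw [min_eq_left hs.2, exp_half_mul_logit hs0 (by linarith)]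
    field_simp
  rw [hK, ← integral_exp_mul_logit_mul_sin_logit _ _ ha hat ht]
  ring

theorem integral_kernel_mul_sin_logit_of_ge (ω : ℝ) {t b : ℝ} (ht : 0 < t) (htb : t ≤ b)
    (hb : b < 1) :
    (ω ^ 2 + 1 / 4) * ∫ s in t..b,
        (min s t - s * t) / (s * (1 - s) * t * (1 - t)) * (sin (ω * logit s) / √(s * (1 - s)))
      = (1 - t)⁻¹ * (expMulSinPrimitive (-(1 / 2)) ω (logit b)
          - expMulSinPrimitive (-(1 / 2)) ω (logit t)) := by
  have hK : ∫ s in t..b,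
        (min s t - s * t) / (s * (1 - s) * t * (1 - t)) * (sin (ω * logit s) / √(s * (1 - s)))
      = (1 - t)⁻¹ * ∫ s in t..b, exp (-(1 / 2) * logit s) * sin (ω * logit s) / (s * (1 - s)) := by
    rw [← intervalIntegral.integral_const_mul]
    refine integral_congr fun s hs => ?_
    rw [Set.uIcc_of_le htb] at hs
    have hs0 : 0 < s := ht.trans_le hs.1
    have h1s : 0 < 1 - s := by linarith [hs.2]
    have h1t : 0 < 1 - t := by linarith
    rw [min_eq_right hs.1, exp_neg_half_mul_logit hs0 (by linarith)]
    field_simp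
  rw [hK, ← integral_exp_mul_logit_mul_sin_logit _ _ ht htb hb]
  ring

theorem intervalIntegrable_kernel_mul_sin_logit (ω : ℝ) {a b t : ℝ} (ha : 0 < a) (hab : a ≤ b)
    (hb : b < 1) (ht0 : 0 < t) (ht1 : t < 1) :
    IntervalIntegrable (fun s =>
      (min s t - s * t) / (s * (1 - s) * t * (1 - t)) * (sin (ω * logit s) / √(s * (1 - s))))
      volume a b := by
  refine ContinuousOn.intervalIntegrable (continuousOn_of_forall_continuousAt fun s hs => ?_)
  rw [Set.uIcc_of_le hab] at hs
  have hs0 : 0 < s := ha.trans_le hs.1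
  have h1s : 0 < 1 - s := by linarith [hs.2]
  have h1t : 0 < 1 - t := by linarith
  have := (hasDerivAt_logit hs0 (by linarith)).continuousAt
  have : s * (1 - s) * t * (1 - t) ≠ 0 := by positivity
  have : √(s * (1 - s)) ≠ 0 := by positivity
  fun_prop (disch := assumption)

theorem inv_mul_expMulSinPrimitive_logit_sub (ω : ℝ) {t : ℝ} (h0 : 0 < t) (h1 : t < 1) :
    t⁻¹ * expMulSinPrimitive (1 / 2) ω (logit t)
        - (1 - t)⁻¹ * expMulSinPrimitive (-(1 / 2)) ω (logit t)
      = sin (ω * logit t) / √(t * (1 - t)) := by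
  have h1t : 0 < 1 - t := by linarith
  rw [expMulSinPrimitive, expMulSinPrimitive, exp_half_mul_logit h0 h1,
    exp_neg_half_mul_logit h0 h1]
  field_simp
  ring

theorem eigenfunction_sine_type_general
    (ε ω : ℝ) (hε : 0 < ε) (hω : 0 < ω)
    (hcond : Real.tan (ω * Real.log ((1 - ε) / ε)) = -(2 * ω)) :
    ∀ t ∈ Set.Icc ε (1 - ε),
      Real.sin (ω * Real.log (t / (1 - t))) / Real.sqrt (t * (1 - t))
        = (ω ^ 2 + 1 / 4) *
            ∫ s in ε..(1 - ε),
              ((min s t - s * t) / (s * (1 - s) * t * (1 - t))) *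
                (Real.sin (ω * Real.log (s / (1 - s))) / Real.sqrt (s * (1 - s))) := by
  rintro t ⟨hεt, ht⟩
  have ht0 : 0 < t := by linarith
  have ht1 : t < 1 := by linarith
  have h1ε : 1 - ε < 1 := by linarith
  have hright : expMulSinPrimitive (-(1 / 2)) ω (logit (1 - ε)) = 0 :=
    expMulSinPrimitive_eq_zero_of_tan_eq (by norm_num) hω.ne'
      (by rw [logit, sub_sub_cancel, hcond]; ring)
  have hleft : expMulSinPrimitive (1 / 2) ω (logit ε) = 0 := by
    rw [← hright, ← expMulSinPrimitive_neg, ← logit_one_sub, sub_sub_cancel]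
  simp only [← logit_def]
  rw [← integral_add_adjacent_intervals
      (intervalIntegrable_kernel_mul_sin_logit ω hε hεt ht1 ht0 ht1)
      (intervalIntegrable_kernel_mul_sin_logit ω ht0 ht h1ε ht0 ht1),
    mul_add, integral_kernel_mul_sin_logit_of_le ω hε hεt ht1,
    integral_kernel_mul_sin_logit_of_ge ω ht0 ht h1ε, hleft, hright,
    ← inv_mul_expMulSinPrimitive_logit_sub ω ht0 ht1]
  ring

/-- Let `0 < ε < 1/2` and let `ω > 0` satisfy
`tan(ω ln((1−ε)/ε)) = −2ω`. With `λ = ω² + 1/4` and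
`f(t) = (t(1−t))^{−1/2} sin(ω ln(t/(1−t)))`, the function `f` satisfies the integral
eigenvalue equation
`f(t) = λ ∫_ε^{1−ε} ((min(s,t) − st)/(s(1−s)t(1−t))) f(s) ds` on `[ε, 1−ε]`. -/
theorem eigenfunction_sine_type
    (ε ω : ℝ) (hε : 0 < ε) (hε' : ε < 1 / 2) (hω : 0 < ω)
    (hcond : Real.tan (ω * Real.log ((1 - ε) / ε)) = -(2 * ω)) :
    ∀ t ∈ Set.Icc ε (1 - ε),
      Real.sin (ω * Real.log (t / (1 - t))) / Real.sqrt (t * (1 - t))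
        = (ω ^ 2 + 1 / 4) *
            ∫ s in ε..(1 - ε),
              ((min s t - s * t) / (s * (1 - s) * t * (1 - t))) *
                (Real.sin (ω * Real.log (s / (1 - s))) / Real.sqrt (s * (1 - s))) :=
  eigenfunction_sine_type_general ε ω hε hω hcond
end

section
/- Let 0 < ε < 1/2 and L = ln((1−ε)/ε). For ω > 0 with tan(ωL) = 1/(2ω) define f_ω(t) = (t(1−t))^{−1/2} cos(ω ln(t/(1−t))), and for ω > 0 with tan(ωL) = −2ω define g_ω(t) = (t(1−t))^{−1/2} sin(ω ln(t/(1−t))), for t ∈ [ε, 1−ε]. Then: (i) if ω₁ ≠ ω₂ both satisfy the cosine condition, ∫_ε^{1−ε} f_{ω₁}(t) f_{ω₂}(t) dt = 0; (ii) if ω₁ ≠ ω₂ both satisfy the sine condition, ∫_ε^{1−ε} g_{ω₁}(t) g_{ω₂}(t) dt = 0; (iii) if ω₁ satisfies the cosine condition and ω₂ the sine condition, ∫_ε^{1−ε} f_{ω₁}(t) g_{ω₂}(t) dt = 0. -/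
open MeasureTheory intervalIntegral

/-- Cosine-type eigenfunction `f_ω(t) = (t(1−t))^{−1/2} cos(ω ln(t/(1−t)))`. -/
noncomputable def fEig (ω t : ℝ) : ℝ :=
  Real.cos (ω * Real.log (t / (1 - t))) / Real.sqrt (t * (1 - t))

/-- Sine-type eigenfunction `g_ω(t) = (t(1−t))^{−1/2} sin(ω ln(t/(1−t)))`. -/
noncomputable def gEig (ω t : ℝ) : ℝ :=
  Real.sin (ω * Real.log (t / (1 - t))) / Real.sqrt (t * (1 - t))

/-!
The substitution `u = log (t / (1 - t))`, with `du = dt / (t (1 - t))`, carries `[ε, 1 - ε]` onto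
`[-L, L]` and turns `f_ω`, `g_ω` into `cos (ω u)`, `sin (ω u)`, the weight `(t (1 - t))^{-1/2}`
squaring to exactly the Jacobian. On `[-L, L]`, `(ω₁² - ω₂²) ∫ φ₁ φ₂` is, up to sign, the jump of
the Wronskian `φ₁' φ₂ - φ₁ φ₂'` between `±L`, and the conditions `tan (ω L) = 1 / (2ω)`, resp.
`-2ω`, make it vanish at both ends; a product `cos (ω₁ u) sin (ω₂ u)` is odd, so its integral
vanishes outright.
-/

open Real Set

theorem integral_eq_zero_of_odd {E : Type*} [NormedAddCommGroup E] [NormedSpace ℝ E]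
    {f : ℝ → E} (hf : ∀ x, f (-x) = -f x) (L : ℝ) : ∫ x in -L..L, f x = 0 := by
  have h : ∫ x in -L..L, f x = -∫ x in -L..L, f x :=
    calc ∫ x in -L..L, f x = ∫ x in -L..L, f (-x) := by rw [integral_comp_neg, neg_neg]
      _ = -∫ x in -L..L, f x := by simp only [hf, intervalIntegral.integral_neg]
  have : IsAddTorsionFree E := .of_isTorsionFree ℝ E
  exact self_eq_neg.mp h

theorem hasDerivAt_log_div_one_sub {t : ℝ} (ht : t ∈ Ioo (0 : ℝ) 1) :
    HasDerivAt (fun t => log (t / (1 - t))) (t * (1 - t))⁻¹ t := by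
  obtain ⟨ht0, ht1⟩ := ht
  have hsub : (1 - t) ≠ 0 := by linarith
  have hdiv : HasDerivAt (fun t => t / (1 - t)) ((1 - t) ^ 2)⁻¹ t :=
    ((hasDerivAt_id' t).fun_div ((hasDerivAt_id' t).const_sub 1) hsub).congr_deriv
      (by field_simp; ring)
  exact (hdiv.log (div_ne_zero ht0.ne' hsub)).congr_deriv (by field_simp)

theorem integral_comp_log_div_one_sub {h : ℝ → ℝ} (hh : Continuous h) {a b : ℝ}
    (ha : a ∈ Ioo (0 : ℝ) 1) (hb : b ∈ Ioo (0 : ℝ) 1) :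
    ∫ t in a..b, h (log (t / (1 - t))) / (t * (1 - t)) =
      ∫ u in log (a / (1 - a))..log (b / (1 - b)), h u := by
  have hsub : uIcc a b ⊆ Ioo 0 1 := ordConnected_Ioo.uIcc_subset ha hb
  simp only [div_eq_mul_inv (h _)]
  refine integral_comp_mul_deriv (fun t ht => hasDerivAt_log_div_one_sub (hsub ht)) ?_ hh
  refine ContinuousOn.inv₀ (by fun_prop) fun t ht => ?_
  obtain ⟨ht0, ht1⟩ := hsub ht
  exact (mul_pos ht0 (sub_pos.2 ht1)).ne'

theorem div_sqrt_mul_div_sqrt (x y : ℝ) {s : ℝ} (hs : 0 ≤ s) :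
    x / √s * (y / √s) = x * y / s := by
  rw [div_mul_div_comm, mul_self_sqrt hs]

theorem integral_div_sqrt_mul_div_sqrt {φ ψ : ℝ → ℝ} (hφ : Continuous φ) (hψ : Continuous ψ)
    {ε : ℝ} (hε : 0 < ε) (hε1 : ε < 1) :
    ∫ t in ε..(1 - ε), φ (log (t / (1 - t))) / √(t * (1 - t)) *
        (ψ (log (t / (1 - t))) / √(t * (1 - t))) =
      ∫ u in -log ((1 - ε) / ε)..log ((1 - ε) / ε), φ u * ψ u := by
  have hmem : ε ∈ Ioo (0 : ℝ) 1 := ⟨hε, hε1⟩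
  have hmem' : 1 - ε ∈ Ioo (0 : ℝ) 1 := ⟨by linarith, by linarith⟩
  have hpos : ∀ t ∈ uIcc ε (1 - ε), 0 ≤ t * (1 - t) := fun t ht => by
    obtain ⟨ht0, ht1⟩ := ordConnected_Ioo.uIcc_subset hmem hmem' ht
    exact (mul_pos ht0 (sub_pos.2 ht1)).le
  rw [integral_congr fun t ht => div_sqrt_mul_div_sqrt _ _ (hpos t ht),
    integral_comp_log_div_one_sub (h := fun u => φ u * ψ u) (hφ.mul hψ) hmem hmem',
    sub_sub_cancel, ← log_inv, inv_div]

section Substitution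

variable {ε : ℝ} (hε : 0 < ε) (hε1 : ε < 1)
include hε hε1

theorem integral_fEig_mul_fEig (ω₁ ω₂ : ℝ) :
    ∫ t in ε..(1 - ε), fEig ω₁ t * fEig ω₂ t =
      ∫ u in -log ((1 - ε) / ε)..log ((1 - ε) / ε), cos (ω₁ * u) * cos (ω₂ * u) :=
  integral_div_sqrt_mul_div_sqrt (φ := fun u => cos (ω₁ * u)) (ψ := fun u => cos (ω₂ * u))
    (by fun_prop) (by fun_prop) hε hε1

theorem integral_gEig_mul_gEig (ω₁ ω₂ : ℝ) :
    ∫ t in ε..(1 - ε), gEig ω₁ t * gEig ω₂ t =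
      ∫ u in -log ((1 - ε) / ε)..log ((1 - ε) / ε), sin (ω₁ * u) * sin (ω₂ * u) :=
  integral_div_sqrt_mul_div_sqrt (φ := fun u => sin (ω₁ * u)) (ψ := fun u => sin (ω₂ * u))
    (by fun_prop) (by fun_prop) hε hε1

theorem integral_fEig_mul_gEig (ω₁ ω₂ : ℝ) :
    ∫ t in ε..(1 - ε), fEig ω₁ t * gEig ω₂ t =
      ∫ u in -log ((1 - ε) / ε)..log ((1 - ε) / ε), cos (ω₁ * u) * sin (ω₂ * u) :=
  integral_div_sqrt_mul_div_sqrt (φ := fun u => cos (ω₁ * u)) (ψ := fun u => sin (ω₂ * u))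
    (by fun_prop) (by fun_prop) hε hε1

end Substitution

theorem hasDerivAt_sin_mul (c u : ℝ) : HasDerivAt (fun u => sin (c * u)) (c * cos (c * u)) u :=
  (((hasDerivAt_id' u).const_mul c).sin).congr_deriv (by ring)

theorem hasDerivAt_cos_mul (c u : ℝ) : HasDerivAt (fun u => cos (c * u)) (-(c * sin (c * u))) u :=
  (((hasDerivAt_id' u).const_mul c).cos).congr_deriv (by ring)

theorem mul_integral_cos_mul_cos (a b L : ℝ) :
    (a ^ 2 - b ^ 2) * ∫ u in -L..L, cos (a * u) * cos (b * u) =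
      2 * (a * sin (a * L) * cos (b * L) - b * cos (a * L) * sin (b * L)) := by
  rw [← intervalIntegral.integral_const_mul, integral_eq_sub_of_hasDerivAt
    (f := fun u => a * sin (a * u) * cos (b * u) - b * cos (a * u) * sin (b * u))]
  · simp only [mul_neg, sin_neg, cos_neg]
    ring
  · intro u _
    exact ((((hasDerivAt_sin_mul a u).const_mul a).mul (hasDerivAt_cos_mul b u)).sub
      (((hasDerivAt_cos_mul a u).const_mul b).mul (hasDerivAt_sin_mul b u))).congr_deriv (by ring)
  · exact (by fun_prop : Continuous _).intervalIntegrable _ _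

theorem mul_integral_sin_mul_sin (a b L : ℝ) :
    (a ^ 2 - b ^ 2) * ∫ u in -L..L, sin (a * u) * sin (b * u) =
      2 * (b * sin (a * L) * cos (b * L) - a * cos (a * L) * sin (b * L)) := by
  rw [← intervalIntegral.integral_const_mul, integral_eq_sub_of_hasDerivAt
    (f := fun u => b * sin (a * u) * cos (b * u) - a * cos (a * u) * sin (b * u))]
  · simp only [mul_neg, sin_neg, cos_neg]
    ring
  · intro u _
    exact ((((hasDerivAt_sin_mul a u).const_mul b).mul (hasDerivAt_cos_mul b u)).sub
      (((hasDerivAt_cos_mul a u).const_mul a).mul (hasDerivAt_sin_mul b u))).congr_deriv (by ring)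
  · exact (by fun_prop : Continuous _).intervalIntegrable _ _

theorem integral_cos_mul_mul_sin_mul (a b L : ℝ) :
    ∫ u in -L..L, cos (a * u) * sin (b * u) = 0 :=
  integral_eq_zero_of_odd (fun u => by simp only [mul_neg, cos_neg, sin_neg]) L

theorem sin_eq_mul_cos_of_tan_eq {x c : ℝ} (h : tan x = c) (hc : c ≠ 0) : sin x = c * cos x := by
  have hcos : cos x ≠ 0 := fun h0 => hc (by rw [← h, tan_eq_sin_div_cos, h0, div_zero])
  rw [← h, tan_eq_sin_div_cos, div_mul_cancel₀ _ hcos]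

/-- Let `0 < ε < 1/2` and `L = ln((1−ε)/ε)`. Among the
eigenfunctions `f_ω` (for `ω > 0` with `tan(ωL) = 1/(2ω)`) and `g_ω` (for `ω > 0`
with `tan(ωL) = −2ω`) on `[ε, 1−ε]`:
(i) any two distinct cosine-type eigenfunctions are orthogonal;
(ii) any two distinct sine-type eigenfunctions are orthogonal;
(iii) any cosine-type eigenfunction is orthogonal to any sine-type one. -/
theorem eigenfunctions_orthogonal
    (ε : ℝ) (hε : 0 < ε) (hε' : ε < 1 / 2) :
    (∀ ω₁ ω₂ : ℝ, 0 < ω₁ → 0 < ω₂ → ω₁ ≠ ω₂ →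
      Real.tan (ω₁ * Real.log ((1 - ε) / ε)) = 1 / (2 * ω₁) →
      Real.tan (ω₂ * Real.log ((1 - ε) / ε)) = 1 / (2 * ω₂) →
      ∫ t in ε..(1 - ε), fEig ω₁ t * fEig ω₂ t = 0) ∧
    (∀ ω₁ ω₂ : ℝ, 0 < ω₁ → 0 < ω₂ → ω₁ ≠ ω₂ →
      Real.tan (ω₁ * Real.log ((1 - ε) / ε)) = -(2 * ω₁) →
      Real.tan (ω₂ * Real.log ((1 - ε) / ε)) = -(2 * ω₂) →
      ∫ t in ε..(1 - ε), gEig ω₁ t * gEig ω₂ t = 0) ∧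
    (∀ ω₁ ω₂ : ℝ, 0 < ω₁ → 0 < ω₂ →
      Real.tan (ω₁ * Real.log ((1 - ε) / ε)) = 1 / (2 * ω₁) →
      Real.tan (ω₂ * Real.log ((1 - ε) / ε)) = -(2 * ω₂) →
      ∫ t in ε..(1 - ε), fEig ω₁ t * gEig ω₂ t = 0) := by
  have hε1 : ε < 1 := by linarith
  have hsq : ∀ ω₁ ω₂ : ℝ, 0 < ω₁ → 0 < ω₂ → ω₁ ≠ ω₂ → ω₁ ^ 2 - ω₂ ^ 2 ≠ 0 :=
    fun ω₁ ω₂ h₁ h₂ hne => by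
      rw [sq_sub_sq]
      exact mul_ne_zero (by positivity) (sub_ne_zero.mpr hne)
  refine ⟨fun ω₁ ω₂ h₁ h₂ hne ht₁ ht₂ => ?_, fun ω₁ ω₂ h₁ h₂ hne ht₁ ht₂ => ?_,
    fun ω₁ ω₂ _ _ _ _ => ?_⟩
  · rw [integral_fEig_mul_fEig hε hε1]
    refine (mul_eq_zero.mp ?_).resolve_left (hsq ω₁ ω₂ h₁ h₂ hne)
    rw [mul_integral_cos_mul_cos, sin_eq_mul_cos_of_tan_eq ht₁ (by positivity),
      sin_eq_mul_cos_of_tan_eq ht₂ (by positivity)]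
    field_simp
    ring
  · rw [integral_gEig_mul_gEig hε hε1]
    refine (mul_eq_zero.mp ?_).resolve_left (hsq ω₁ ω₂ h₁ h₂ hne)
    rw [mul_integral_sin_mul_sin, sin_eq_mul_cos_of_tan_eq ht₁ (by linarith),
      sin_eq_mul_cos_of_tan_eq ht₂ (by linarith)]
    ring
  · rw [integral_fEig_mul_gEig hε hε1, integral_cos_mul_mul_sin_mul]
end

section
/- Fix 0 < t < s < 1. For each n ≥ 1 let i_n, j_n be integers with 1 ≤ i_n ≤ j_n ≤ n+1 such that i_n/(n+1) → t and j_n/(n+1) → s as n → ∞. For 1 ≤ k ≤ n set ψ_k^{(n)} = (n+1)⁴/(k(n+1−k))², and define κ_n = (1/(n+1)²) Σ_{k=1}^n ψ_k^{(n)} ( max(0, k + i_n − j_n) + max(0, k − i_n + j_n − (n+1)) − k²/(n+1) ). Then κ_n → 2( 2(s−t) − 1 ) ln( (s−t)/(1−(s−t)) ) − 2 as n → ∞. -/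
/-!
Write `m = n + 1` and `a = j_n - i_n`, `b = m - a`. The weight splits by partial fractions as
`m² / (k (m - k))² = g k + g (m - k)` with `g x = 1 / x² + 2 / (m x)`, and reflecting `k ↦ m - k`
folds the two truncated terms into `κ_n = ∑ g k (|k - a| + |k - b|) - m ∑ 1 / k²`. Summing exactly
gives `κ_n = -2 a ∑_{a<k≤n} 1/k² - 2 b ∑_{b<k≤n} 1/k² + (4 a / m - 2) (H_a - H_b) - 4 / m`.
Telescoping squeezes `a ∑_{a<k≤n} 1/k²` between `a / (a + 1) - a / m` and `1 - a / m`, and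
`H_a - H_b → log (a / b)` because `H_k - log k` converges (to the Euler–Mascheroni constant).
-/

open Filter Finset Real

/-- `κ_n` depends on `i_n, j_n` only through `a = j_n - i_n`. -/
noncomputable def circKernelEntry (n a : ℕ) : ℝ :=
  (1 / ((n : ℝ) + 1) ^ 2) *
    ∑ k ∈ Icc 1 n, (((n : ℝ) + 1) ^ 4 / ((k : ℝ) * (((n : ℝ) + 1) - k)) ^ 2) *
      (max 0 ((k : ℝ) - a) + max 0 ((k : ℝ) - (((n : ℝ) + 1) - a)) - (k : ℝ) ^ 2 / ((n : ℝ) + 1))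

theorem sum_Icc_one_add_sum_Ioc {M : Type*} [AddCommMonoid M] (f : ℕ → M) {a n : ℕ}
    (h : a ≤ n) : ∑ k ∈ Icc 1 a, f k + ∑ k ∈ Ioc a n, f k = ∑ k ∈ Icc 1 n, f k := by
  simpa only [← Icc_add_one_left_eq_Ioc, zero_add] using sum_Ioc_consecutive f (Nat.zero_le a) h

theorem sum_Icc_one_reflect {M : Type*} [AddCommMonoid M] (n : ℕ) (f : ℝ → M) :
    ∑ k ∈ Icc 1 n, f ((n : ℝ) + 1 - k) = ∑ k ∈ Icc 1 n, f k := by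
  refine sum_nbij' (fun k ↦ n + 1 - k) (fun k ↦ n + 1 - k) ?_ ?_ ?_ ?_ ?_ <;>
    intro k hk <;> rw [mem_Icc] at hk
  · rw [mem_Icc]; omega
  · rw [mem_Icc]; omega
  · omega
  · omega
  · rw [Nat.cast_sub (by omega), Nat.cast_add_one]

theorem sum_abs_sub_mul (f : ℕ → ℝ) {a n : ℕ} (h : a ≤ n) :
    ∑ k ∈ Icc 1 n, f k * |(k : ℝ) - a| =
      ∑ k ∈ Icc 1 n, f k * ((k : ℝ) - a) + 2 * ∑ k ∈ Icc 1 a, f k * ((a : ℝ) - k) := by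
  have hpos :
      ∑ k ∈ Icc 1 a, f k * ((a : ℝ) - k) = ∑ k ∈ Icc 1 n, f k * max 0 ((a : ℝ) - k) := by
    refine sum_subset_zero_on_sdiff (Icc_subset_Icc_right h) (fun k hk ↦ ?_) (fun k hk ↦ ?_)
    · simp only [Finset.mem_sdiff, mem_Icc, not_and, not_le] at hk
      have : (a : ℝ) < k := by exact_mod_cast hk.2 hk.1.1
      rw [max_eq_left (by linarith), mul_zero]
    · have : (k : ℝ) ≤ a := by exact_mod_cast (mem_Icc.mp hk).2
      rw [max_eq_right (by linarith)]
  rw [hpos, mul_sum, ← sum_add_distrib]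
  refine sum_congr rfl fun k _ ↦ ?_
  rcases le_total (k : ℝ) a with hk | hk
  · rw [abs_of_nonpos (by linarith), max_eq_right (by linarith)]; ring
  · rw [abs_of_nonneg (by linarith), max_eq_left (by linarith)]; ring

theorem sq_div_mul_sub_eq {m x : ℝ} (hm : m ≠ 0) (hx : x ≠ 0) (hmx : m - x ≠ 0) :
    (m / (x * (m - x))) ^ 2 =
      ((x ^ 2)⁻¹ + 2 / (m * x)) + (((m - x) ^ 2)⁻¹ + 2 / (m * (m - x))) := by
  field_simp
  ring

theorem circKernelEntry_eq_sum_abs (n a : ℕ) :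
    circKernelEntry n a = ∑ k ∈ Icc 1 n,
      ((((k : ℝ) ^ 2)⁻¹ + 2 / (((n : ℝ) + 1) * k)) * (|(k : ℝ) - a| + |(k : ℝ) - ((n + 1) - a)|)
        - ((n : ℝ) + 1) * ((k : ℝ) ^ 2)⁻¹) := by
  set m : ℝ := (n : ℝ) + 1
  let g : ℝ → ℝ := fun x ↦ (x ^ 2)⁻¹ + 2 / (m * x)
  let P : ℝ → ℝ := fun x ↦ max 0 (x - a) + max 0 (x - (m - a))
  let B : ℝ → ℝ := fun x ↦ g x * P (m - x) - m * (x ^ 2)⁻¹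
  have hsplit : ∀ k ∈ Icc 1 n, (1 / m ^ 2) * ((m ^ 4 / ((k : ℝ) * (m - k)) ^ 2) *
      (P k - (k : ℝ) ^ 2 / m)) = g k * P k + B (m - k) := by
    intro k hk
    have hk1 : (1 : ℝ) ≤ k := by exact_mod_cast (mem_Icc.mp hk).1
    have hkn : (k : ℝ) ≤ n := by exact_mod_cast (mem_Icc.mp hk).2
    have hm : m ≠ 0 := by positivity
    have hmk : m - k ≠ 0 := by linarith
    have hsq := sq_div_mul_sub_eq hm (by positivity : (k : ℝ) ≠ 0) hmk
    simp only [B, sub_sub_cancel]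
    rw [← mul_assoc, show (1 / m ^ 2) * (m ^ 4 / ((k : ℝ) * (m - k)) ^ 2) =
      (m / (k * (m - k))) ^ 2 by field_simp, hsq]
    simp only [g]
    field_simp
    ring
  have habs : ∀ x : ℝ, max 0 x + max 0 (-x) = |x| := fun x ↦ by
    rw [max_comm, max_comm 0, max_zero_add_max_neg_zero_eq_abs_self]
  rw [circKernelEntry, mul_sum, sum_congr rfl hsplit, sum_add_distrib, sum_Icc_one_reflect n B,
    ← sum_add_distrib]
  refine sum_congr rfl fun k _ ↦ ?_
  simp only [B, P, g, ← habs (k - a), ← habs (k - (m - a))]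
  ring_nf

theorem sum_Icc_sub_mul_weight {m : ℝ} (hm : m ≠ 0) (a : ℕ) :
    ∑ k ∈ Icc 1 a, (((k : ℝ) ^ 2)⁻¹ + 2 / (m * k)) * ((a : ℝ) - k) =
      a * ∑ k ∈ Icc 1 a, ((k : ℝ) ^ 2)⁻¹ - (1 - 2 * a / m) * harmonic a - 2 * a / m := by
  have hterm : ∀ k ∈ Icc 1 a, (((k : ℝ) ^ 2)⁻¹ + 2 / (m * k)) * ((a : ℝ) - k) =
      a * ((k : ℝ) ^ 2)⁻¹ - (1 - 2 * a / m) * (k : ℝ)⁻¹ - 2 / m := by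
    intro k hk
    have : (k : ℝ) ≠ 0 := by have := (mem_Icc.mp hk).1; positivity
    field_simp
    ring
  rw [sum_congr rfl hterm, sum_sub_distrib, sum_sub_distrib, ← mul_sum, ← mul_sum, sum_const,
    Nat.card_Icc, harmonic_eq_sum_Icc]
  push_cast
  ring

theorem sum_sub_mul_weight_add_sum_sub_mul_weight {m : ℝ} (hm : m ≠ 0) (n : ℕ) {a b : ℝ}
    (hab : a + b = m) :
    ∑ k ∈ Icc 1 n, (((k : ℝ) ^ 2)⁻¹ + 2 / (m * k)) * ((k : ℝ) - a) +
      ∑ k ∈ Icc 1 n, (((k : ℝ) ^ 2)⁻¹ + 2 / (m * k)) * ((k : ℝ) - b) =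
      n * (4 / m) - m * ∑ k ∈ Icc 1 n, ((k : ℝ) ^ 2)⁻¹ := by
  obtain rfl : b = m - a := by rw [← hab]; ring
  calc _ = ∑ k ∈ Icc 1 n, (4 / m - m * ((k : ℝ) ^ 2)⁻¹) := by
        rw [← sum_add_distrib]
        refine sum_congr rfl fun k hk ↦ ?_
        have : (k : ℝ) ≠ 0 := by have := (mem_Icc.mp hk).1; positivity
        field_simp
        ring
    _ = _ := by rw [sum_sub_distrib, sum_const, Nat.card_Icc, nsmul_eq_mul, mul_sum]; simp

theorem circKernelEntry_eq {n a b : ℕ} (hab : a + b = n + 1) (ha : a ≤ n) (hb : b ≤ n) :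
    circKernelEntry n a =
      -2 * (a * ∑ k ∈ Ioc a n, ((k : ℝ) ^ 2)⁻¹) - 2 * (b * ∑ k ∈ Ioc b n, ((k : ℝ) ^ 2)⁻¹)
        + (4 * a / ((n : ℝ) + 1) - 2) * (harmonic a - harmonic b) - 4 / ((n : ℝ) + 1) := by
  have hsum := circKernelEntry_eq_sum_abs n a
  have habm : (a : ℝ) + b = n + 1 := by exact_mod_cast hab
  generalize hm : (n : ℝ) + 1 = m at hsum habm ⊢
  have hm0 : m ≠ 0 := by rw [← hm]; positivity
  rw [show m - a = b by rw [← habm]; ring] at hsum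
  have hlin := sum_sub_mul_weight_add_sum_sub_mul_weight hm0 n habm
  have hTa := sum_Icc_one_add_sum_Ioc (fun k : ℕ ↦ ((k : ℝ) ^ 2)⁻¹) ha
  have hTb := sum_Icc_one_add_sum_Ioc (fun k : ℕ ↦ ((k : ℝ) ^ 2)⁻¹) hb
  simp only [mul_add, sum_sub_distrib, sum_add_distrib, ← mul_sum] at hsum
  rw [hsum, sum_abs_sub_mul _ ha, sum_abs_sub_mul _ hb, sum_Icc_sub_mul_weight hm0,
    sum_Icc_sub_mul_weight hm0]
  -- `ring1` treats `m⁻¹` as an atom, so `m * m⁻¹ = 1` has to be supplied.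
  linear_combination (norm := skip) hlin + 2 * a * hTa + 2 * b * hTb +
    (2 * ∑ k ∈ Icc 1 n, ((k : ℝ) ^ 2)⁻¹ + 4 * harmonic b / m - 4 / m) * habm + 4 / m * hm
    + 4 * harmonic b * mul_inv_cancel₀ hm0
  ring1

theorem inv_add_one_sub_inv_add_one_le_sum_Ioc_inv_sq {a n : ℕ} (h : a ≤ n) :
    ((a : ℝ) + 1)⁻¹ - ((n : ℝ) + 1)⁻¹ ≤ ∑ k ∈ Ioc a n, ((k : ℝ) ^ 2)⁻¹ := by
  induction n, h using Nat.le_induction with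
  | base => simp
  | succ n hn ih =>
    rw [sum_Ioc_succ_top hn]
    have hstep : ((n : ℝ) + 1)⁻¹ - ((n : ℝ) + 1 + 1)⁻¹ ≤ (((n + 1 : ℕ) : ℝ) ^ 2)⁻¹ := by
      push_cast
      rw [inv_sub_inv (by positivity) (by positivity), add_sub_cancel_left, one_div]
      exact inv_anti₀ (by positivity) (by nlinarith)
    push_cast at hstep ⊢
    linarith

theorem tendsto_atTop_of_tendsto_div {a : ℕ → ℕ} {c : ℝ} (hc : 0 < c)
    (h : Tendsto (fun n ↦ (a n : ℝ) / ((n : ℝ) + 1)) atTop (nhds c)) : Tendsto a atTop atTop := by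
  rw [← tendsto_natCast_atTop_iff (R := ℝ)]
  have hn := tendsto_atTop_add_const_right _ 1 (tendsto_natCast_atTop_atTop (R := ℝ))
  refine (h.pos_mul_atTop hc hn).congr fun n ↦ ?_
  field_simp

theorem eventually_pos_lt_of_tendsto_div {x : ℕ → ℝ} {c : ℝ} (hc0 : 0 < c) (hc1 : c < 1)
    (h : Tendsto (fun n ↦ x n / ((n : ℝ) + 1)) atTop (nhds c)) :
    ∀ᶠ n in atTop, 0 < x n ∧ x n < n + 1 := by
  filter_upwards [h.eventually (Ioo_mem_nhds hc0 hc1)] with n hn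
  have hn1 : (0 : ℝ) < n + 1 := by positivity
  exact ⟨(div_pos_iff_of_pos_right hn1).mp hn.1, (div_lt_one hn1).mp hn.2⟩

theorem tendsto_mul_sum_Ioc_inv_sq {a : ℕ → ℕ} {c : ℝ} (hc : 0 < c)
    (hle : ∀ᶠ n in atTop, a n ≤ n)
    (h : Tendsto (fun n ↦ (a n : ℝ) / ((n : ℝ) + 1)) atTop (nhds c)) :
    Tendsto (fun n ↦ (a n : ℝ) * ∑ k ∈ Ioc (a n) n, ((k : ℝ) ^ 2)⁻¹) atTop (nhds (1 - c)) := by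
  have hta := tendsto_atTop_of_tendsto_div hc h
  have hlower : Tendsto (fun n ↦ (a n : ℝ) / (a n + 1) - a n / ((n : ℝ) + 1)) atTop
      (nhds (1 - c)) := ((tendsto_natCast_div_add_atTop (1 : ℝ)).comp hta).sub h
  refine tendsto_of_tendsto_of_tendsto_of_le_of_le' hlower (tendsto_const_nhds.sub h) ?_ ?_
  · filter_upwards [hle] with n hn
    have := inv_add_one_sub_inv_add_one_le_sum_Ioc_inv_sq hn
    calc (a n : ℝ) / (a n + 1) - a n / ((n : ℝ) + 1)
        = a n * (((a n : ℝ) + 1)⁻¹ - ((n : ℝ) + 1)⁻¹) := by ring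
      _ ≤ _ := by gcongr
  · filter_upwards [hle, hta.eventually_ge_atTop 1] with n hn ha
    have ha0 : (0 : ℝ) < a n := by exact_mod_cast ha
    have hn0 : (0 : ℝ) < n := by exact_mod_cast ha.trans hn
    have := sum_Ioc_inv_sq_le_sub (α := ℝ) (by omega) hn
    calc (a n : ℝ) * ∑ k ∈ Ioc (a n) n, ((k : ℝ) ^ 2)⁻¹
        ≤ a n * ((a n : ℝ)⁻¹ - (n : ℝ)⁻¹) := by gcongr
      _ = 1 - a n / n := by field_simp
      _ ≤ 1 - a n / ((n : ℝ) + 1) := by gcongr; linarith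

theorem tendsto_harmonic_sub_harmonic {a b : ℕ → ℕ} {c d : ℝ} (hc : 0 < c) (hd : 0 < d)
    (ha : Tendsto (fun n ↦ (a n : ℝ) / ((n : ℝ) + 1)) atTop (nhds c))
    (hb : Tendsto (fun n ↦ (b n : ℝ) / ((n : ℝ) + 1)) atTop (nhds d)) :
    Tendsto (fun n ↦ (harmonic (a n) : ℝ) - harmonic (b n)) atTop (nhds (log c - log d)) := by
  have hta := tendsto_atTop_of_tendsto_div hc ha
  have htb := tendsto_atTop_of_tendsto_div hd hb
  have hlim := ((tendsto_harmonic_sub_log.comp hta).sub (tendsto_harmonic_sub_log.comp htb)).add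
    ((ha.log hc.ne').sub (hb.log hd.ne'))
  rw [sub_self, zero_add] at hlim
  refine hlim.congr' ?_
  filter_upwards [hta.eventually_ge_atTop 1, htb.eventually_ge_atTop 1] with n ha1 hb1
  have ha0 : (a n : ℝ) ≠ 0 := by positivity
  have hb0 : (b n : ℝ) ≠ 0 := by positivity
  rw [Function.comp_apply, Function.comp_apply, log_div ha0 (by positivity),
    log_div hb0 (by positivity)]
  ring

theorem tendsto_circKernelEntry {a : ℕ → ℕ} {c : ℝ} (hc0 : 0 < c) (hc1 : c < 1)
    (h : Tendsto (fun n ↦ (a n : ℝ) / ((n : ℝ) + 1)) atTop (nhds c)) :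
    Tendsto (fun n ↦ circKernelEntry n (a n)) atTop
      (nhds (2 * (2 * c - 1) * log (c / (1 - c)) - 2)) := by
  have hbounds : ∀ᶠ n in atTop, 1 ≤ a n ∧ a n ≤ n := by
    filter_upwards [eventually_pos_lt_of_tendsto_div hc0 hc1 h] with n hn
    have hlt : a n < n + 1 := by exact_mod_cast hn.2
    exact ⟨by exact_mod_cast hn.1, Nat.lt_succ_iff.mp hlt⟩
  have hb : Tendsto (fun n ↦ ((n + 1 - a n : ℕ) : ℝ) / ((n : ℝ) + 1)) atTop (nhds (1 - c)) := by
    refine (tendsto_const_nhds.sub h).congr' ?_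
    filter_upwards [hbounds] with n hn
    rw [Nat.cast_sub (by omega), one_sub_div (by positivity)]
    push_cast
    ring
  have hTa := tendsto_mul_sum_Ioc_inv_sq hc0 (hbounds.mono fun n hn ↦ hn.2) h
  have hTb := tendsto_mul_sum_Ioc_inv_sq (by linarith) (hbounds.mono fun n hn ↦ by omega) hb
  have hH := tendsto_harmonic_sub_harmonic hc0 (by linarith) h hb
  have hinv : Tendsto (fun n : ℕ ↦ 4 / ((n : ℝ) + 1)) atTop (nhds 0) :=
    tendsto_const_nhds.div_atTop (tendsto_atTop_add_const_right _ 1 tendsto_natCast_atTop_atTop)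
  have hlim := (((hTa.const_mul (-2)).sub (hTb.const_mul 2)).add
    (((h.const_mul 4).sub_const 2).mul hH)).sub hinv
  convert hlim.congr' ?_ using 2
  · rw [log_div hc0.ne' (by linarith)]
    ring
  · filter_upwards [hbounds] with n hn
    rw [circKernelEntry_eq (b := n + 1 - a n) (by omega) hn.2 (by omega)]
    ring

theorem kernel_limit_Rn_circularized_general
    (t s : ℝ) (ht : 0 < t) (hts : t < s) (hs : s < 1)
    (i j : ℕ → ℕ)
    (hit : Tendsto (fun n : ℕ => (i n : ℝ) / ((n : ℝ) + 1)) atTop (nhds t))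
    (hjs : Tendsto (fun n : ℕ => (j n : ℝ) / ((n : ℝ) + 1)) atTop (nhds s)) :
    Tendsto (fun n : ℕ =>
        (1 / ((n : ℝ) + 1) ^ 2) *
          ∑ k ∈ Finset.Icc 1 n,
            (((n : ℝ) + 1) ^ 4 / ((k : ℝ) * (((n : ℝ) + 1) - (k : ℝ))) ^ 2) *
              (max 0 ((k : ℝ) + (i n : ℝ) - (j n : ℝ))
                + max 0 ((k : ℝ) - (i n : ℝ) + (j n : ℝ) - ((n : ℝ) + 1))
                - (k : ℝ) ^ 2 / ((n : ℝ) + 1)))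
      atTop
      (nhds (2 * (2 * (s - t) - 1) * Real.log ((s - t) / (1 - (s - t))) - 2)) := by
  have hts' : 0 < s - t := sub_pos.mpr hts
  have hst : s - t < 1 := by linarith
  have hdiff : Tendsto (fun n ↦ ((j n : ℝ) - i n) / ((n : ℝ) + 1)) atTop (nhds (s - t)) := by
    simpa only [sub_div] using hjs.sub hit
  have hij : ∀ᶠ n in atTop, i n ≤ j n := by
    filter_upwards [eventually_pos_lt_of_tendsto_div hts' hst hdiff] with n hn
    exact_mod_cast (sub_pos.mp hn.1).le
  have hcast : ∀ᶠ n in atTop, ((j n - i n : ℕ) : ℝ) = j n - i n := by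
    filter_upwards [hij] with n hn
    exact Nat.cast_sub hn
  refine (tendsto_circKernelEntry (a := fun n ↦ j n - i n) hts' hst
    (hdiff.congr' ?_)).congr' ?_
  · filter_upwards [hcast] with n hn
    rw [hn]
  · filter_upwards [hcast] with n hn
    rw [circKernelEntry, hn]
    refine congrArg _ (sum_congr rfl fun k _ ↦ ?_)
    rw [sub_sub_eq_add_sub,
      show (k : ℝ) - (n + 1 - (j n - i n)) = k - i n + j n - (n + 1) by ring]

/-- Fix `0 < t < s < 1` and sequences `1 ≤ i_n ≤ j_n ≤ n+1` (for
`n ≥ 1`) with `i_n/(n+1) → t`, `j_n/(n+1) → s`. With weights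
`ψ_k = (n+1)⁴/(k(n+1−k))²` (the circularized `R̃_n²` weights
`ψ_k = 1/(μ_k(1−μ_k))²`, `μ_k = k/(n+1)`), the kernel-matrix entries
`κ_n = (1/(n+1)²) Σ_{k=1}^n ψ_k (max(0, k+i_n−j_n) + max(0, k−i_n+j_n−(n+1)) − k²/(n+1))`
converge to `2(2(s−t) − 1) ln((s−t)/(1−(s−t))) − 2`. -/
theorem kernel_limit_Rn_circularized
    (t s : ℝ) (ht : 0 < t) (hts : t < s) (hs : s < 1)
    (i j : ℕ → ℕ)
    (hi1 : ∀ n, 1 ≤ n → 1 ≤ i n) (hij : ∀ n, 1 ≤ n → i n ≤ j n)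
    (hjn : ∀ n, 1 ≤ n → j n ≤ n + 1)
    (hit : Tendsto (fun n : ℕ => (i n : ℝ) / ((n : ℝ) + 1)) atTop (nhds t))
    (hjs : Tendsto (fun n : ℕ => (j n : ℝ) / ((n : ℝ) + 1)) atTop (nhds s)) :
    Tendsto (fun n : ℕ =>
        (1 / ((n : ℝ) + 1) ^ 2) *
          ∑ k ∈ Finset.Icc 1 n,
            (((n : ℝ) + 1) ^ 4 / ((k : ℝ) * (((n : ℝ) + 1) - (k : ℝ))) ^ 2) *
              (max 0 ((k : ℝ) + (i n : ℝ) - (j n : ℝ))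
                + max 0 ((k : ℝ) - (i n : ℝ) + (j n : ℝ) - ((n : ℝ) + 1))
                - (k : ℝ) ^ 2 / ((n : ℝ) + 1)))
      atTop
      (nhds (2 * (2 * (s - t) - 1) * Real.log ((s - t) / (1 - (s - t))) - 2)) :=
  kernel_limit_Rn_circularized_general t s ht hts hs i j hit hjs
end
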